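/- Fix ε > 0 and an integer d ≥ 2 with 2(d−1)ε ≤ 1. Suppose W_i ∈ ℝ^{n_i×n_{i−1}} satisfies the WDC with constants ε and 1 for i = 1,…,d−1. Then for all nonzero h, x ∈ ℝ^{n_0}: ‖Λ_{d−1,+,h}‖·‖Λ_{d−1,+,x}‖ ≤ (1 + 4ε(d−1))/2^{d−1}, where ‖·‖ denotes the spectral norm. -/

import Mathlib

open Real Filter Set Matrix MeasureTheory ProbabilityTheory

noncomputable section

/-- Euclidean dot product on `Fin n → ℝ`. -/
def dotp {n : ℕ} (x y : Fin n → ℝ) : ℝ := ∑ i, x i * y i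

/-- Euclidean (ℓ²) norm on `Fin n → ℝ`. -/
def euclNorm {n : ℕ} (x : Fin n → ℝ) : ℝ := Real.sqrt (∑ i, (x i) ^ 2)

/-- The angle between two vectors. -/
def ang {n : ℕ} (x y : Fin n → ℝ) : ℝ :=
  Real.arccos (dotp x y / (euclNorm x * euclNorm y))

/-- Normalization of a vector. -/
def hatv {n : ℕ} (x : Fin n → ℝ) : Fin n → ℝ := (euclNorm x)⁻¹ • x

/-- The matrix `M_{x̂↔ŷ}` sending `x̂ ↦ ŷ`, `ŷ ↦ x̂` and `span{x,y}ᗮ ∋ z ↦ 0`. -/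
def Mmat {n : ℕ} (x y : Fin n → ℝ) : Matrix (Fin n) (Fin n) ℝ :=
  if Real.sin (ang x y) = 0 then Matrix.vecMulVec (hatv y) (hatv x)
  else ((Real.sin (ang x y)) ^ 2)⁻¹ •
    (Matrix.vecMulVec (hatv x) (hatv y) + Matrix.vecMulVec (hatv y) (hatv x)
      - Real.cos (ang x y) •
        (Matrix.vecMulVec (hatv x) (hatv x) + Matrix.vecMulVec (hatv y) (hatv y)))

/-- The matrix `Q_{x,y}`. -/
def Qmat {n : ℕ} (x y : Fin n → ℝ) : Matrix (Fin n) (Fin n) ℝ :=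
  ((Real.pi - ang x y) / (2 * Real.pi)) • (1 : Matrix (Fin n) (Fin n) ℝ)
    + (Real.sin (ang x y) / (2 * Real.pi)) • Mmat x y

/-- Spectral norm of a (rectangular) matrix. -/
def specNorm {m n : ℕ} (A : Matrix (Fin m) (Fin n) ℝ) : ℝ :=
  sSup {r : ℝ | ∃ v : Fin n → ℝ, euclNorm v ≤ 1 ∧ r = euclNorm (A.mulVec v)}

/-- `W_{+,v}`: zero out the rows of `W` whose inner product with `v` is not positive. -/
def pospart {m n : ℕ} (W : Matrix (Fin m) (Fin n) ℝ) (v : Fin n → ℝ) :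
    Matrix (Fin m) (Fin n) ℝ :=
  fun i j => if 0 < W.mulVec v i then W i j else 0

/-- The Weight Distribution Condition with constants `ε` and `α`. -/
def WDC {l n : ℕ} (ε α : ℝ) (W : Matrix (Fin l) (Fin n) ℝ) : Prop :=
  ∀ x y : Fin n → ℝ, x ≠ 0 → y ≠ 0 →
    specNorm ((pospart W x)ᵀ * pospart W y - α • Qmat x y) ≤ ε

/-- The joint Weight Distribution Condition with constants `ε` and `α`. -/
def jointWDC {l n p : ℕ} (ε α : ℝ) (B : Matrix (Fin l) (Fin n) ℝ)
    (C : Matrix (Fin l) (Fin p) ℝ) : Prop :=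
  ∀ h x : Fin n → ℝ, h ≠ 0 → x ≠ 0 → ∀ m y : Fin p → ℝ, m ≠ 0 → y ≠ 0 →
    specNorm ((pospart B h)ᵀ * Matrix.diagonal ((pospart C m).mulVec m * (pospart C y).mulVec y)
        * pospart B x - ((α / l) * dotp m ((Qmat m y).mulVec y)) • Qmat h x)
      ≤ (ε / l) * euclNorm m * euclNorm y ∧
    specNorm ((pospart C m)ᵀ * Matrix.diagonal ((pospart B h).mulVec h * (pospart B x).mulVec x)
        * pospart C y - ((α / l) * dotp h ((Qmat h x).mulVec x)) • Qmat m y)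
      ≤ (ε / l) * euclNorm h * euclNorm x

/-- `Λ_{d,+,h}` for the layer dimensions `nn` and weights `W`. -/
def LambdaMat (nn : ℕ → ℕ) (W : ∀ i : ℕ, Matrix (Fin (nn (i + 1))) (Fin (nn i)) ℝ)
    (h : Fin (nn 0) → ℝ) : (d : ℕ) → Matrix (Fin (nn d)) (Fin (nn 0)) ℝ
  | 0 => 1
  | (d + 1) => pospart (W d) ((LambdaMat nn W h d).mulVec h) * LambdaMat nn W h d

/-- The function `g(θ) = arccos(((π−θ)cos θ + sin θ)/π)`. -/
def gfun (θ : ℝ) : ℝ := Real.arccos (((Real.pi - θ) * Real.cos θ + Real.sin θ) / Real.pi)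

/-- `θ̌_i`: iterates of `g` starting at `π`. -/
def thetaChk : ℕ → ℝ
  | 0 => Real.pi
  | (i + 1) => gfun (thetaChk i)

/-- `ρ_a`. -/
def rhoConst (a : ℕ) : ℝ :=
  ∑ i ∈ Finset.Ico 1 a, (Real.sin (thetaChk i) / Real.pi) *
    ∏ j ∈ Finset.Ico (i + 1) a, (Real.pi - thetaChk j) / Real.pi

/-- `θ̄_i`: iterates of `g` starting at the angle between `p` and `q`. -/
def thetaBar {n : ℕ} (p q : Fin n → ℝ) : ℕ → ℝ
  | 0 => ang p q
  | (i + 1) => gfun (thetaBar p q i)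

/-- `t̃_{p,q}` with `a` layers. -/
def ttil {n : ℕ} (a : ℕ) (p q : Fin n → ℝ) : Fin n → ℝ :=
  ((2 : ℝ) ^ a)⁻¹ •
    ((∏ i ∈ Finset.range a, (Real.pi - thetaBar p q i) / Real.pi) • q
      + (∑ i ∈ Finset.range a, (Real.sin (thetaBar p q i) / Real.pi) *
          (∏ j ∈ Finset.Ico (i + 1) a, (Real.pi - thetaBar p q j) / Real.pi) *
          (euclNorm q / euclNorm p)) • p)

/-- The hyperbolic neighborhood `A_{ε,(h̃,m̃)}`. -/
def Aset {n p : ℕ} (ε : ℝ) (ht : Fin n → ℝ) (mt : Fin p → ℝ) :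
    Set ((Fin n → ℝ) × (Fin p → ℝ)) :=
  {hm | ∃ c : ℝ, 0 < c ∧
    Real.sqrt (euclNorm (hm.1 - c • ht) ^ 2 + euclNorm (hm.2 - c⁻¹ • mt) ^ 2)
      ≤ ε * Real.sqrt (euclNorm (c • ht) ^ 2 + euclNorm (c⁻¹ • mt) ^ 2)}

/-- The set `K = {(h,0)} ∪ {(0,m)}`. -/
def Kset (n p : ℕ) : Set ((Fin n → ℝ) × (Fin p → ℝ)) :=
  {hm | hm.2 = 0} ∪ {hm | hm.1 = 0}

/-- One-sided directional derivative. -/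
def HasOneSidedDeriv {n p : ℕ} (F : ((Fin n → ℝ) × (Fin p → ℝ)) → ℝ)
    (z v : (Fin n → ℝ) × (Fin p → ℝ)) (D : ℝ) : Prop :=
  Filter.Tendsto (fun t : ℝ => (F (z + t • v) - F z) / t) (nhdsWithin 0 (Set.Ioi 0)) (nhds D)

noncomputable def clm18 {m n : ℕ} (A : Matrix (Fin m) (Fin n) ℝ) :
    EuclideanSpace ℝ (Fin n) →L[ℝ] EuclideanSpace ℝ (Fin m) :=
  LinearMap.toContinuousLinearMap (Matrix.toEuclideanLin A)

lemma euclNorm_eq {n : ℕ} (v : Fin n → ℝ) :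
    euclNorm v = ‖(WithLp.equiv 2 (Fin n → ℝ)).symm v‖ := by
  rw [EuclideanSpace.norm_eq]
  simp [euclNorm, Real.norm_eq_abs, sq_abs]

lemma dotp_eq {n : ℕ} (x y : Fin n → ℝ) :
    dotp x y = inner (𝕜 := ℝ) ((WithLp.equiv 2 (Fin n → ℝ)).symm x)
      ((WithLp.equiv 2 (Fin n → ℝ)).symm y) := by
  simp [dotp, PiLp.inner_apply, RCLike.inner_apply, mul_comm]

lemma specNorm_eq_opNorm {m n : ℕ} (A : Matrix (Fin m) (Fin n) ℝ) :
    specNorm A = ‖clm18 A‖ := by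
  rw [← ContinuousLinearMap.sSup_unitClosedBall_eq_norm (clm18 A)]
  unfold specNorm
  congr 1
  ext r
  simp only [Set.mem_image, Set.mem_setOf_eq, Metric.mem_closedBall, dist_zero_right]
  constructor
  · rintro ⟨v, hv, rfl⟩
    refine ⟨(WithLp.equiv 2 (Fin n → ℝ)).symm v, ?_, ?_⟩
    · rw [← euclNorm_eq]; exact hv
    · rw [euclNorm_eq]; rfl
  · rintro ⟨x, hx, rfl⟩
    refine ⟨WithLp.equiv 2 (Fin n → ℝ) x, ?_, ?_⟩
    · rw [euclNorm_eq]; simpa using hx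
    · rw [euclNorm_eq]; congr 1

lemma specNorm_nonneg {m n : ℕ} (A : Matrix (Fin m) (Fin n) ℝ) : 0 ≤ specNorm A := by
  rw [specNorm_eq_opNorm]; exact norm_nonneg _

lemma euclNorm_mulVec_le {m n : ℕ} (A : Matrix (Fin m) (Fin n) ℝ) (v : Fin n → ℝ) :
    euclNorm (A.mulVec v) ≤ specNorm A * euclNorm v := by
  rw [specNorm_eq_opNorm, euclNorm_eq, euclNorm_eq]
  exact (clm18 A).le_opNorm ((WithLp.equiv 2 (Fin n → ℝ)).symm v)

lemma specNorm_le_bound {m n : ℕ} (A : Matrix (Fin m) (Fin n) ℝ) {c : ℝ} (hc : 0 ≤ c)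
    (h : ∀ v, euclNorm (A.mulVec v) ≤ c * euclNorm v) : specNorm A ≤ c := by
  rw [specNorm_eq_opNorm]
  refine ContinuousLinearMap.opNorm_le_bound _ hc fun x => ?_
  have := h (WithLp.equiv 2 (Fin n → ℝ) x)
  rw [euclNorm_eq, euclNorm_eq] at this
  simp at this; exact this

lemma euclNorm_pos {n : ℕ} {v : Fin n → ℝ} (hv : v ≠ 0) : 0 < euclNorm v := by
  have h : 0 < ∑ i, v i ^ 2 := by
    obtain ⟨i, hi⟩ := Function.ne_iff.1 hv
    exact Finset.sum_pos' (fun j _ => sq_nonneg _) ⟨i, Finset.mem_univ i, pow_two_pos_of_ne_zero (by simpa using hi)⟩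
  exact Real.sqrt_pos.2 h

lemma dotp_self {n : ℕ} (v : Fin n → ℝ) : dotp v v = ∑ i, v i ^ 2 := by
  simp [dotp, sq]

lemma euclNorm_mul_self {n : ℕ} (v : Fin n → ℝ) : euclNorm v * euclNorm v = dotp v v := by
  rw [dotp_self, euclNorm, Real.mul_self_sqrt (by positivity)]

lemma ang_self {n : ℕ} {v : Fin n → ℝ} (hv : v ≠ 0) : ang v v = 0 := by
  rw [ang, ← euclNorm_mul_self, div_self (by have h := euclNorm_pos hv; exact (mul_pos h h).ne'),
    Real.arccos_one]

lemma Qmat_self {n : ℕ} {v : Fin n → ℝ} (hv : v ≠ 0) :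
    Qmat v v = ((1:ℝ)/2) • (1 : Matrix (Fin n) (Fin n) ℝ) := by
  have hπ := Real.pi_ne_zero
  have h : (Real.pi - 0) / (2 * Real.pi) = 1/2 := by
    rw [sub_zero]; field_simp
  rw [Qmat, ang_self hv, Real.sin_zero, h]
  simp

lemma dotp_le {n : ℕ} (x y : Fin n → ℝ) : dotp x y ≤ euclNorm x * euclNorm y := by
  rw [dotp_eq, euclNorm_eq, euclNorm_eq]
  exact real_inner_le_norm _ _

lemma mulVec_norm_sq {m n : ℕ} (A : Matrix (Fin m) (Fin n) ℝ) (v : Fin n → ℝ) :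
    euclNorm (A.mulVec v) * euclNorm (A.mulVec v) = dotp v ((Aᵀ * A).mulVec v) := by
  rw [euclNorm_mul_self]
  show dotProduct (A.mulVec v) (A.mulVec v) = dotProduct v ((Aᵀ * A).mulVec v)
  rw [← Matrix.mulVec_mulVec, Matrix.dotProduct_mulVec v, Matrix.vecMul_transpose]

lemma dotp_add {n : ℕ} (u a b : Fin n → ℝ) : dotp u (a + b) = dotp u a + dotp u b := by
  simp [dotp, mul_add, Finset.sum_add_distrib]

lemma pospart_le_sqrt {m n : ℕ} {ε : ℝ} (hε : 0 ≤ ε) {Wm : Matrix (Fin m) (Fin n) ℝ}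
    (hW : WDC ε 1 Wm) {v : Fin n → ℝ} (hv : v ≠ 0) :
    specNorm (pospart Wm v) ≤ Real.sqrt (1/2 + ε) := by
  set P := pospart Wm v with hP
  set M := Pᵀ * P - ((1:ℝ)/2) • (1 : Matrix (Fin n) (Fin n) ℝ) with hM
  have hMε : specNorm M ≤ ε := by
    have := hW v v hv hv
    rwa [one_smul, Qmat_self hv] at this
  refine specNorm_le_bound _ (Real.sqrt_nonneg _) fun u => ?_
  have key : euclNorm (P.mulVec u) * euclNorm (P.mulVec u) ≤ (1/2 + ε) * (euclNorm u * euclNorm u) := by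
    have hsplit : Pᵀ * P = M + ((1:ℝ)/2) • (1 : Matrix (Fin n) (Fin n) ℝ) := by
      rw [hM]; abel
    have h1 : dotp u (M.mulVec u) ≤ ε * (euclNorm u * euclNorm u) := by
      calc dotp u (M.mulVec u) ≤ euclNorm u * euclNorm (M.mulVec u) := dotp_le _ _
        _ ≤ euclNorm u * (specNorm M * euclNorm u) := by
            exact mul_le_mul_of_nonneg_left (euclNorm_mulVec_le _ _) (Real.sqrt_nonneg _)
        _ ≤ ε * (euclNorm u * euclNorm u) := by
            have h0 : 0 ≤ euclNorm u := Real.sqrt_nonneg _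
            nlinarith [mul_le_mul_of_nonneg_right (mul_le_mul_of_nonneg_right hMε h0) h0]
    have h2 : (((1:ℝ)/2) • (1 : Matrix (Fin n) (Fin n) ℝ)).mulVec u = ((1:ℝ)/2) • u := by
      rw [Matrix.smul_mulVec, Matrix.one_mulVec]
    have h3 : dotp u (((1:ℝ)/2) • u) = (1/2) * dotp u u := by
      unfold dotp; rw [Finset.mul_sum]
      refine Finset.sum_congr rfl fun i _ => ?_
      simp [smul_eq_mul]; ring
    rw [mulVec_norm_sq, hsplit, Matrix.add_mulVec, dotp_add, h2, h3, euclNorm_mul_self]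
    have h4 := euclNorm_mul_self u
    rw [h4] at h1
    nlinarith [h1]
  have h0 : 0 ≤ euclNorm u := Real.sqrt_nonneg _
  have h0' : 0 ≤ euclNorm (P.mulVec u) := Real.sqrt_nonneg _
  calc euclNorm (P.mulVec u)
      = Real.sqrt (euclNorm (P.mulVec u) * euclNorm (P.mulVec u)) :=
        (Real.sqrt_mul_self h0').symm
    _ ≤ Real.sqrt ((1/2 + ε) * (euclNorm u * euclNorm u)) := Real.sqrt_le_sqrt key
    _ = Real.sqrt (1/2 + ε) * euclNorm u := by
        rw [Real.sqrt_mul (by linarith), Real.sqrt_mul_self h0]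

lemma euclNorm_zero {n : ℕ} : euclNorm (0 : Fin n → ℝ) = 0 := by
  simp [euclNorm]

lemma specNorm_zero_mat {m n : ℕ} : specNorm (0 : Matrix (Fin m) (Fin n) ℝ) = 0 := by
  refine le_antisymm (specNorm_le_bound _ le_rfl fun v => ?_) (specNorm_nonneg _)
  simp [Matrix.zero_mulVec, euclNorm_zero]

lemma specNorm_one_le {n : ℕ} : specNorm (1 : Matrix (Fin n) (Fin n) ℝ) ≤ 1 := by
  refine specNorm_le_bound _ zero_le_one fun v => ?_
  simp [Matrix.one_mulVec]

lemma specNorm_mul_le {m n p : ℕ} (A : Matrix (Fin m) (Fin n) ℝ)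
    (B : Matrix (Fin n) (Fin p) ℝ) : specNorm (A * B) ≤ specNorm A * specNorm B := by
  refine specNorm_le_bound _ (mul_nonneg (specNorm_nonneg _) (specNorm_nonneg _)) fun v => ?_
  rw [← Matrix.mulVec_mulVec, mul_assoc]
  calc euclNorm (A.mulVec (B.mulVec v)) ≤ specNorm A * euclNorm (B.mulVec v) :=
        euclNorm_mulVec_le _ _
    _ ≤ specNorm A * (specNorm B * euclNorm v) :=
        mul_le_mul_of_nonneg_left (euclNorm_mulVec_le _ _) (specNorm_nonneg _)

lemma pospart_zero {m n : ℕ} (W : Matrix (Fin m) (Fin n) ℝ) : pospart W 0 = 0 := by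
  ext i j
  simp [pospart, Matrix.mulVec_zero]

lemma lambda_bound {ε : ℝ} (hε : 0 ≤ ε) (d : ℕ) (nn : ℕ → ℕ)
    (W : ∀ i : ℕ, Matrix (Fin (nn (i + 1))) (Fin (nn i)) ℝ)
    (hW : ∀ i, i < d - 1 → WDC ε 1 (W i)) :
    ∀ k, k ≤ d - 1 → ∀ h : Fin (nn 0) → ℝ, h ≠ 0 →
      specNorm (LambdaMat nn W h k) ≤ Real.sqrt (1/2 + ε) ^ k := by
  intro k
  induction k with
  | zero => intro _ h _; simpa [LambdaMat] using (specNorm_one_le (n := nn 0))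
  | succ k ih =>
    intro hk h hh
    have hk' : k ≤ d - 1 := Nat.le_of_succ_le hk
    have hihk := ih hk' h hh
    show specNorm (pospart (W k) ((LambdaMat nn W h k).mulVec h) * LambdaMat nn W h k) ≤ _
    by_cases hv : (LambdaMat nn W h k).mulVec h = 0
    · rw [hv, pospart_zero, Matrix.zero_mul, specNorm_zero_mat]
      positivity
    · calc specNorm (pospart (W k) ((LambdaMat nn W h k).mulVec h) * LambdaMat nn W h k)
          ≤ specNorm (pospart (W k) ((LambdaMat nn W h k).mulVec h)) *
              specNorm (LambdaMat nn W h k) := specNorm_mul_le _ _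
        _ ≤ Real.sqrt (1/2 + ε) * Real.sqrt (1/2 + ε) ^ k := by
            refine mul_le_mul (pospart_le_sqrt hε (hW k ?_) hv) hihk (specNorm_nonneg _)
              (Real.sqrt_nonneg _)
            omega
        _ = Real.sqrt (1/2 + ε) ^ (k + 1) := (pow_succ' _ _).symm

lemma pow_quad_bound {x : ℝ} (hx : 0 ≤ x) :
    ∀ k : ℕ, (k : ℝ) * x ≤ 1 → (1 + x) ^ k ≤ 1 + (k : ℝ) * x + ((k : ℝ) * x) ^ 2 := by
  intro k
  induction k with
  | zero => norm_num
  | succ k ih =>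
    intro hk
    have hc : (0:ℝ) ≤ (k : ℝ) := Nat.cast_nonneg k
    have hk' : (k : ℝ) * x ≤ 1 := by push_cast at hk; nlinarith
    have h1 := ih hk'
    have h2 : (1 + x) ^ (k + 1) ≤ (1 + (k : ℝ) * x + ((k : ℝ) * x) ^ 2) * (1 + x) := by
      rw [pow_succ]
      exact mul_le_mul_of_nonneg_right h1 (by linarith)
    have h3 : (k : ℝ) ^ 2 * x ≤ (k : ℝ) := by nlinarith
    push_cast
    nlinarith [h2, h3, sq_nonneg x, mul_nonneg hc hx]

/-- spectral norm bound on the truncated layer products. -/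
theorem statement_18
    (ε : ℝ) (d : ℕ) (nn : ℕ → ℕ)
    (W : ∀ i : ℕ, Matrix (Fin (nn (i + 1))) (Fin (nn i)) ℝ)
    (hε0 : 0 < ε) (hd : 2 ≤ d) (hεd : 2 * ((d : ℝ) - 1) * ε ≤ 1)
    (hW : ∀ i, i < d - 1 → WDC ε 1 (W i)) :
    ∀ h x : Fin (nn 0) → ℝ, h ≠ 0 → x ≠ 0 →
      specNorm (LambdaMat nn W h (d - 1)) * specNorm (LambdaMat nn W x (d - 1))
        ≤ (1 + 4 * ε * ((d : ℝ) - 1)) / 2 ^ (d - 1) := by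
  intro h x hh hx
  have hε : (0:ℝ) ≤ ε := hε0.le
  have hΛh := lambda_bound hε d nn W hW (d-1) le_rfl h hh
  have hΛx := lambda_bound hε d nn W hW (d-1) le_rfl x hx
  have hprod : specNorm (LambdaMat nn W h (d-1)) * specNorm (LambdaMat nn W x (d-1))
      ≤ (1/2 + ε) ^ (d-1) := by
    calc specNorm (LambdaMat nn W h (d-1)) * specNorm (LambdaMat nn W x (d-1))
        ≤ Real.sqrt (1/2+ε)^(d-1) * Real.sqrt (1/2+ε)^(d-1) :=
          mul_le_mul hΛh hΛx (specNorm_nonneg _) (by positivity)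
      _ = (1/2+ε)^(d-1) := by rw [← mul_pow, Real.mul_self_sqrt (by linarith)]
  refine hprod.trans ?_
  have hcast : ((d - 1 : ℕ) : ℝ) = (d:ℝ) - 1 := by
    rw [Nat.cast_sub (by omega : 1 ≤ d)]; norm_num
  have ht0 : (0:ℝ) ≤ ((d-1:ℕ):ℝ) * (2*ε) := by positivity
  have ht1 : ((d-1:ℕ):ℝ) * (2*ε) ≤ 1 := by rw [hcast]; nlinarith [hεd]
  have hq := pow_quad_bound (by linarith : (0:ℝ) ≤ 2*ε) (d-1) ht1
  have key : (1/2 + ε : ℝ) = (1 + 2*ε)/2 := by ring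
  rw [key, div_pow]
  gcongr
  calc (1+2*ε)^(d-1) ≤ 1 + ((d-1:ℕ):ℝ)*(2*ε) + (((d-1:ℕ):ℝ)*(2*ε))^2 := hq
    _ ≤ 1 + 4*ε*((d:ℝ)-1) := by rw [hcast] at ht0 ht1 ⊢; nlinarith [ht0, ht1]

end
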